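/- Let α, β, γ be real numbers with α > -1/2, γ > -1, α + β + γ > -3/2, and min(γ, −1/2) < α − 1. Define, for t ≥ 1, F(t) = ∫₀¹ s^{2α} (∫ₛ¹ u^β (u−s)^γ du) (∫ₜ^{t+1} v^β (v−s)^γ dv) ds, V(t) = ∫₀^{t+1} s^{2α} (∫_{max(s,t)}^{t+1} u^β (u−s)^γ du)² ds, C = ∫₀¹ s^{2α} (∫ₛ¹ u^β (u−s)^γ du)² ds, and r(t) = F(t) / (√C · √V(t)). Then the series ∑_{n=1}^∞ r(n) converges and the integral ∫₁^∞ r(t) dt is finite. -/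

import Mathlib

/-!
Write `g(s) = ∫ₛ¹ u^β (u-s)^γ du`. Splitting at `u = 2s` gives `g(s) ≲ s^q` for any `q < 0` with
`q ≤ β + γ + 1`, while `∫ₜ^{t+1} v^β (v-s)^γ dv ≲ t^(β+γ)` uniformly in `s ∈ [0, 1]`; since
`α > -1/2` one can choose `q` with `s^(2α+q)` integrable, so `F(t) ≲ t^(β+γ)`. For the variance,
restricting the `s`-integral to a window `[t - ℓ, t - ℓ/2]` with `1/2 ≤ ℓ ≤ t/2` gives
`V(t) ≳ t^(2α+2β) ℓ^(2γ+1)`; taking `ℓ = 1/2` or `ℓ = t/2` according to the sign of `2γ + 1` yields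
`√V(t) ≳ t^(α+β+max(0, γ+1/2))`. Hence `r(t) ≲ t^(min(γ, -1/2) - α)`, an exponent `< -1`.
-/

open MeasureTheory intervalIntegral Set

lemma rpow_le_mul_rpow_of_le_mul {t x c p : ℝ} (ht : 0 < t) (hc : 1 ≤ c)
    (h₁ : t ≤ c * x) (h₂ : x ≤ c * t) : x ^ p ≤ c ^ |p| * t ^ p := by
  have hc0 : 0 < c := one_pos.trans_le hc
  have hx : 0 < x := by nlinarith
  rcases le_or_gt 0 p with hp | hp
  · calc x ^ p ≤ (c * t) ^ p := Real.rpow_le_rpow hx.le h₂ hp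
      _ = c ^ |p| * t ^ p := by rw [Real.mul_rpow hc0.le ht.le, abs_of_nonneg hp]
  · calc x ^ p ≤ (t / c) ^ p :=
          Real.rpow_le_rpow_of_nonpos (by positivity) ((div_le_iff₀ hc0).2 (by linarith)) hp.le
      _ = c ^ |p| * t ^ p := by
          rw [Real.div_rpow ht.le hc0.le, abs_of_neg hp, Real.rpow_neg hc0.le, div_eq_inv_mul]

lemma inv_mul_rpow_le_rpow_of_le_mul {t x c p : ℝ} (ht : 0 < t) (hc : 1 ≤ c)
    (h₁ : t ≤ c * x) (h₂ : x ≤ c * t) : (c ^ |p|)⁻¹ * t ^ p ≤ x ^ p := by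
  have hx : 0 < x := by nlinarith
  rw [inv_mul_le_iff₀ (by positivity)]
  exact rpow_le_mul_rpow_of_le_mul hx hc h₂ h₁

lemma intervalIntegrable_sub_rpow {γ : ℝ} (hγ : -1 < γ) (s a b : ℝ) :
    IntervalIntegrable (fun u => (u - s) ^ γ) volume a b := by
  simpa using (intervalIntegrable_rpow' (a := a - s) (b := b - s) hγ).comp_sub_right s

lemma integral_sub_rpow {γ : ℝ} (hγ : -1 < γ) (s d : ℝ) :
    ∫ u in s..d, (u - s) ^ γ = (d - s) ^ (γ + 1) / (γ + 1) := by
  rw [integral_comp_sub_right (· ^ γ), integral_rpow (Or.inl hγ), sub_self,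
    Real.zero_rpow (by linarith), sub_zero]

lemma intervalIntegrable_kernel (β : ℝ) {γ s a b : ℝ} (hγ : -1 < γ) (ha : 0 < a) (hab : a ≤ b) :
    IntervalIntegrable (fun u => u ^ β * (u - s) ^ γ) volume a b :=
  (intervalIntegrable_sub_rpow hγ s a b).continuousOn_mul <|
    continuousOn_id.rpow_const fun u hu => Or.inl (by
      rw [uIcc_of_le hab] at hu
      exact (ha.trans_le hu.1).ne')

lemma kernel_nonneg (β γ : ℝ) {s u : ℝ} (hs : 0 ≤ s) (hsu : s ≤ u) : 0 ≤ u ^ β * (u - s) ^ γ :=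
  mul_nonneg (Real.rpow_nonneg (hs.trans hsu) _) (Real.rpow_nonneg (sub_nonneg.2 hsu) _)

lemma integral_kernel_nonneg (β γ : ℝ) {s a b : ℝ} (hs : 0 ≤ s) (hsa : s ≤ a) (hab : a ≤ b) :
    0 ≤ ∫ u in a..b, u ^ β * (u - s) ^ γ :=
  intervalIntegral.integral_nonneg hab fun _ hu => kernel_nonneg β γ hs (hsa.trans hu.1)

lemma integral_mono_of_nonneg_on {f g : ℝ → ℝ} {a b : ℝ} (hab : a ≤ b)
    (hf : ∀ x ∈ Ioc a b, 0 ≤ f x) (hg : IntervalIntegrable g volume a b)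
    (h : ∀ x ∈ Ioc a b, f x ≤ g x) : ∫ x in a..b, f x ≤ ∫ x in a..b, g x := by
  rw [integral_of_le hab, integral_of_le hab]
  exact integral_mono_of_nonneg ((ae_restrict_iff' measurableSet_Ioc).2 (ae_of_all _ hf)) hg.1
    ((ae_restrict_iff' measurableSet_Ioc).2 (ae_of_all _ h))

lemma mul_le_integral_of_le_on {f : ℝ → ℝ} {a b w₁ w₂ m : ℝ} (ha : a ≤ w₁) (hw : w₁ ≤ w₂)
    (hb : w₂ ≤ b) (hf : ∀ x ∈ Ioc a b, 0 ≤ f x) (hfi : IntervalIntegrable f volume a b)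
    (hm : ∀ x ∈ Icc w₁ w₂, m ≤ f x) : (w₂ - w₁) * m ≤ ∫ x in a..b, f x :=
  calc (w₂ - w₁) * m = ∫ _ in w₁..w₂, m := by simp
    _ ≤ ∫ x in w₁..w₂, f x :=
        integral_mono_on hw intervalIntegrable_const
          (hfi.mono_set (by
            rw [uIcc_of_le hw, uIcc_of_le (ha.trans (hw.trans hb))]
            exact Icc_subset_Icc ha hb)) hm
    _ ≤ ∫ x in a..b, f x :=
        integral_mono_interval ha hw hb
          ((ae_restrict_iff' measurableSet_Ioc).2 (ae_of_all _ hf)) hfi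

lemma integral_kernel_near_le {β γ s d : ℝ} (hγ : -1 < γ) (hs : 0 < s) (hsd : s ≤ d)
    (hd : d ≤ 2 * s) :
    ∫ u in s..d, u ^ β * (u - s) ^ γ ≤ 2 ^ |β| / (γ + 1) * s ^ (β + γ + 1) := by
  have hγ1 : 0 < γ + 1 := by linarith
  calc ∫ u in s..d, u ^ β * (u - s) ^ γ
      ≤ ∫ u in s..d, 2 ^ |β| * s ^ β * (u - s) ^ γ :=
        integral_mono_of_nonneg_on hsd (fun u hu => kernel_nonneg β γ hs.le hu.1.le)
          ((intervalIntegrable_sub_rpow hγ s s d).const_mul _) fun u hu =>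
            mul_le_mul_of_nonneg_right
              (rpow_le_mul_rpow_of_le_mul hs one_le_two (by linarith [hu.1]) (by linarith [hu.2]))
              (Real.rpow_nonneg (by linarith [hu.1]) _)
    _ = 2 ^ |β| * s ^ β * ((d - s) ^ (γ + 1) / (γ + 1)) := by
        rw [intervalIntegral.integral_const_mul, integral_sub_rpow hγ]
    _ ≤ 2 ^ |β| * s ^ β * (s ^ (γ + 1) / (γ + 1)) := by
        gcongr
        linarith
    _ = 2 ^ |β| / (γ + 1) * s ^ (β + γ + 1) := by
        rw [show β + γ + 1 = β + (γ + 1) by ring, Real.rpow_add hs β]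
        ring

lemma integral_kernel_far_le {β γ q s : ℝ} (hq : q < 0) (hqβγ : q - 1 ≤ β + γ) (hs : 0 < s)
    (h2s : 2 * s ≤ 1) :
    ∫ u in (2 * s)..1, u ^ β * (u - s) ^ γ ≤ 2 ^ |γ| / (-q) * s ^ q := by
  have hpos : ∀ u ∈ Icc (2 * s) 1, 0 < u := fun u hu => by linarith [hu.1]
  calc ∫ u in (2 * s)..1, u ^ β * (u - s) ^ γ
      ≤ ∫ u in (2 * s)..1, 2 ^ |γ| * u ^ (q - 1) := by
        refine integral_mono_of_nonneg_on h2s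
          (fun u hu => kernel_nonneg β γ hs.le (by linarith [hu.1])) ?_ fun u hu => ?_
        · refine (ContinuousOn.intervalIntegrable ?_).const_mul _
          refine continuousOn_id.rpow_const fun u hu => Or.inl (hpos u ?_).ne'
          rwa [uIcc_of_le h2s] at hu
        · have hu0 := hpos u (Ioc_subset_Icc_self hu)
          calc u ^ β * (u - s) ^ γ ≤ u ^ β * (2 ^ |γ| * u ^ γ) := by
                gcongr
                exact rpow_le_mul_rpow_of_le_mul hu0 one_le_two (by linarith [hu.1]) (by linarith)
            _ = 2 ^ |γ| * u ^ (β + γ) := by rw [Real.rpow_add hu0]; ring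
            _ ≤ 2 ^ |γ| * u ^ (q - 1) := mul_le_mul_of_nonneg_left
                (Real.rpow_le_rpow_of_exponent_ge hu0 hu.2 hqβγ) (by positivity)
    _ = 2 ^ |γ| * (((2 * s) ^ q - 1) / -q) := by
        have h0 : (0 : ℝ) ∉ uIcc (2 * s) 1 := fun h => (hpos 0 (uIcc_of_le h2s ▸ h)).false
        rw [intervalIntegral.integral_const_mul, integral_rpow (Or.inr ⟨by linarith, h0⟩),
          sub_add_cancel, Real.one_rpow, ← neg_sub, neg_div, div_neg]
    _ ≤ 2 ^ |γ| / (-q) * s ^ q := by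
        rw [Real.mul_rpow zero_le_two hs.le]
        have h2q : (2 : ℝ) ^ q ≤ 1 := Real.rpow_le_one_of_one_le_of_nonpos one_le_two hq.le
        have hsq : 0 < s ^ q := Real.rpow_pos_of_pos hs q
        rw [mul_div_assoc', div_mul_eq_mul_div]
        gcongr
        · linarith
        · nlinarith

lemma integral_kernel_le_rpow {β γ q s : ℝ} (hγ : -1 < γ) (hq : q < 0) (hqβγ : q ≤ β + γ + 1)
    (hs : 0 < s) (hs1 : s ≤ 1) :
    ∫ u in s..1, u ^ β * (u - s) ^ γ ≤ (2 ^ |β| / (γ + 1) + 2 ^ |γ| / (-q)) * s ^ q := by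
  have hnear : ∀ d, s ≤ d → d ≤ 2 * s →
      ∫ u in s..d, u ^ β * (u - s) ^ γ ≤ 2 ^ |β| / (γ + 1) * s ^ q := fun d hsd hd =>
    (integral_kernel_near_le hγ hs hsd hd).trans <| mul_le_mul_of_nonneg_left
      (Real.rpow_le_rpow_of_exponent_ge hs hs1 hqβγ) (div_nonneg (by positivity) (by linarith))
  have hfar : 0 ≤ 2 ^ |γ| / (-q) * s ^ q :=
    mul_nonneg (div_nonneg (by positivity) (by linarith)) (by positivity)
  rw [add_mul]
  rcases le_or_gt 1 (2 * s) with h2s | h2s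
  · linarith [hnear 1 hs1 h2s]
  · rw [← integral_add_adjacent_intervals (intervalIntegrable_kernel β hγ hs (by linarith))
      (intervalIntegrable_kernel β hγ (by linarith) h2s.le)]
    linarith [hnear (2 * s) (by linarith) le_rfl,
      integral_kernel_far_le (β := β) (γ := γ) hq (by linarith) hs h2s.le]

lemma integral_sub_rpow_shift_le {γ s t : ℝ} (hγ : -1 < γ) (hs0 : 0 ≤ s) (hs1 : s ≤ 1)
    (ht : 1 ≤ t) :
    ∫ v in t..t + 1, (v - s) ^ γ ≤ 2 ^ |γ| * (1 + 3 ^ (γ + 1) / (γ + 1)) * t ^ γ := by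
  have ht0 : 0 < t := by linarith
  have hγ1 : 0 < γ + 1 := by linarith
  have hC : 0 ≤ 3 ^ (γ + 1) / (γ + 1) := by positivity
  rcases le_or_gt 2 t with h2t | h2t
  · calc ∫ v in t..t + 1, (v - s) ^ γ ≤ ∫ _ in t..t + 1, 2 ^ |γ| * t ^ γ :=
          integral_mono_on (by linarith) (intervalIntegrable_sub_rpow hγ s _ _)
            intervalIntegrable_const fun v hv =>
              rpow_le_mul_rpow_of_le_mul ht0 one_le_two (by linarith [hv.1]) (by linarith [hv.2])
      _ = 2 ^ |γ| * 1 * t ^ γ := by simp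
      _ ≤ 2 ^ |γ| * (1 + 3 ^ (γ + 1) / (γ + 1)) * t ^ γ := by gcongr; linarith
  · have hwhole : ∫ v in t..t + 1, (v - s) ^ γ ≤ ∫ v in s..t + 1, (v - s) ^ γ :=
      integral_mono_interval (by linarith) (by linarith) le_rfl
        ((ae_restrict_iff' measurableSet_Ioc).2 (ae_of_all _ fun v hv =>
          Real.rpow_nonneg (by linarith [hv.1]) _))
        (intervalIntegrable_sub_rpow hγ s _ _)
    have htγ : 1 ≤ 2 ^ |γ| * t ^ γ := by
      have := inv_mul_rpow_le_rpow_of_le_mul (p := γ) one_pos one_le_two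
        (by linarith) (by linarith : t ≤ 2 * 1)
      rwa [Real.one_rpow, mul_one, inv_le_iff_one_le_mul₀ (by positivity), mul_comm] at this
    calc ∫ v in t..t + 1, (v - s) ^ γ ≤ (t + 1 - s) ^ (γ + 1) / (γ + 1) :=
          (integral_sub_rpow hγ s (t + 1)) ▸ hwhole
      _ ≤ 3 ^ (γ + 1) / (γ + 1) := by gcongr <;> linarith
      _ ≤ 3 ^ (γ + 1) / (γ + 1) * (2 ^ |γ| * t ^ γ) := le_mul_of_one_le_right hC htγ
      _ ≤ 2 ^ |γ| * (1 + 3 ^ (γ + 1) / (γ + 1)) * t ^ γ := by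
          nlinarith [mul_nonneg (by positivity : (0 : ℝ) ≤ 2 ^ |γ|) (by positivity : 0 ≤ t ^ γ)]

lemma integral_kernel_shift_le {β γ s t : ℝ} (hγ : -1 < γ) (hs0 : 0 ≤ s) (hs1 : s ≤ 1)
    (ht : 1 ≤ t) :
    ∫ v in t..t + 1, v ^ β * (v - s) ^ γ ≤
      2 ^ |β| * (2 ^ |γ| * (1 + 3 ^ (γ + 1) / (γ + 1))) * t ^ (β + γ) := by
  have ht0 : 0 < t := by linarith
  calc ∫ v in t..t + 1, v ^ β * (v - s) ^ γ ≤ ∫ v in t..t + 1, 2 ^ |β| * t ^ β * (v - s) ^ γ :=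
        integral_mono_of_nonneg_on (by linarith)
          (fun v hv => kernel_nonneg β γ hs0 (by linarith [hv.1]))
          ((intervalIntegrable_sub_rpow hγ s _ _).const_mul _) fun v hv =>
            mul_le_mul_of_nonneg_right
              (rpow_le_mul_rpow_of_le_mul ht0 one_le_two (by linarith [hv.1]) (by linarith [hv.2]))
              (Real.rpow_nonneg (by linarith [hv.1]) _)
    _ = 2 ^ |β| * t ^ β * ∫ v in t..t + 1, (v - s) ^ γ := intervalIntegral.integral_const_mul _ _
    _ ≤ 2 ^ |β| * t ^ β * (2 ^ |γ| * (1 + 3 ^ (γ + 1) / (γ + 1)) * t ^ γ) := by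
        gcongr
        exact integral_sub_rpow_shift_le hγ hs0 hs1 ht
    _ = 2 ^ |β| * (2 ^ |γ| * (1 + 3 ^ (γ + 1) / (γ + 1))) * t ^ (β + γ) := by
        rw [Real.rpow_add ht0]
        ring

lemma cov_integrand_nonneg (α β γ : ℝ) {s t : ℝ} (hs0 : 0 ≤ s) (hs1 : s ≤ 1) (ht : 1 ≤ t) :
    0 ≤ s ^ (2 * α) * (∫ u in s..1, u ^ β * (u - s) ^ γ) *
      (∫ v in t..(t + 1), v ^ β * (v - s) ^ γ) :=
  mul_nonneg (mul_nonneg (Real.rpow_nonneg hs0 _) (integral_kernel_nonneg β γ hs0 le_rfl hs1))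
    (integral_kernel_nonneg β γ hs0 (hs1.trans ht) (by linarith))

lemma exists_integral_cov_le_rpow {α β γ : ℝ} (hα : -(1/2 : ℝ) < α) (hγ : -1 < γ)
    (hαβγ : -(3/2 : ℝ) < α + β + γ) :
    ∃ K, 0 ≤ K ∧ ∀ t, 1 ≤ t →
      ∫ s in (0:ℝ)..1, s ^ (2 * α) * (∫ u in s..1, u ^ β * (u - s) ^ γ) *
        (∫ v in t..(t + 1), v ^ β * (v - s) ^ γ) ≤ K * t ^ (β + γ) := by
  -- `q < 0`, `q ≤ β + γ + 1` and `2α + q > -1`, so that `s ^ (2α + q)` is integrable at `0`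
  set q := min (β + γ + 1) (-((2 * α + 1) / 4))
  have hq : q < 0 := (min_le_right _ _).trans_lt (by linarith)
  have hqβγ : q ≤ β + γ + 1 := min_le_left _ _
  have hαq : -1 < 2 * α + q := by
    rw [← min_add_add_left]
    exact lt_min (by linarith) (by linarith)
  set Kg := 2 ^ |β| / (γ + 1) + 2 ^ |γ| / (-q)
  set Kh := 2 ^ |β| * (2 ^ |γ| * (1 + 3 ^ (γ + 1) / (γ + 1)))
  have hKg : 0 ≤ Kg := add_nonneg (div_nonneg (by positivity) (by linarith))
    (div_nonneg (by positivity) (by linarith))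
  have hKh : 0 ≤ Kh := mul_nonneg (by positivity)
    (mul_nonneg (by positivity) (add_nonneg zero_le_one (div_nonneg (by positivity) (by linarith))))
  refine ⟨Kg * Kh / (2 * α + q + 1), div_nonneg (mul_nonneg hKg hKh) (by linarith), fun t ht => ?_⟩
  calc ∫ s in (0:ℝ)..1, s ^ (2 * α) * (∫ u in s..1, u ^ β * (u - s) ^ γ) *
        (∫ v in t..(t + 1), v ^ β * (v - s) ^ γ)
      ≤ ∫ s in (0:ℝ)..1, Kg * Kh * t ^ (β + γ) * s ^ (2 * α + q) := by
        refine integral_mono_of_nonneg_on zero_le_one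
          (fun s hs => cov_integrand_nonneg α β γ hs.1.le hs.2 ht)
          ((intervalIntegrable_rpow' hαq).const_mul _) fun s hs => ?_
        calc s ^ (2 * α) * (∫ u in s..1, u ^ β * (u - s) ^ γ) *
              (∫ v in t..(t + 1), v ^ β * (v - s) ^ γ)
            ≤ s ^ (2 * α) * (Kg * s ^ q) * (Kh * t ^ (β + γ)) :=
              mul_le_mul
                (mul_le_mul_of_nonneg_left (integral_kernel_le_rpow hγ hq hqβγ hs.1 hs.2)
                  (Real.rpow_nonneg hs.1.le _))
                (integral_kernel_shift_le hγ hs.1.le hs.2 ht)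
                (integral_kernel_nonneg β γ hs.1.le (hs.2.trans ht) (by linarith))
                (mul_nonneg (Real.rpow_nonneg hs.1.le _)
                  (mul_nonneg hKg (Real.rpow_nonneg hs.1.le _)))
          _ = Kg * Kh * t ^ (β + γ) * s ^ (2 * α + q) := by rw [Real.rpow_add hs.1]; ring
    _ = Kg * Kh / (2 * α + q + 1) * t ^ (β + γ) := by
        rw [intervalIntegral.integral_const_mul, integral_rpow (Or.inl hαq), Real.one_rpow,
          Real.zero_rpow (by linarith)]
        ring

lemma inv_mul_le_integral_kernel_shift {β γ s t m : ℝ} (hγ : -1 < γ) (ht : 1 ≤ t) (hs : 0 ≤ s)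
    (hst : s ≤ t) (hm0 : 0 ≤ m) (hm : ∀ u ∈ Icc t (t + 1), m ≤ (u - s) ^ γ) :
    (2 ^ |β|)⁻¹ * t ^ β * m ≤ ∫ u in t..t + 1, u ^ β * (u - s) ^ γ := by
  have ht0 : 0 < t := by linarith
  simpa using mul_le_integral_of_le_on le_rfl (by linarith : t ≤ t + 1) le_rfl
    (fun u hu => kernel_nonneg β γ hs (hst.trans hu.1.le))
    (intervalIntegrable_kernel β hγ ht0 (by linarith)) fun u hu =>
      mul_le_mul (inv_mul_rpow_le_rpow_of_le_mul ht0 one_le_two (by linarith [hu.1])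
        (by linarith [hu.2])) (hm u hu) hm0 (Real.rpow_nonneg (by linarith [hu.1]) _)

lemma le_integral_var_of_window {α β γ t ℓ : ℝ} (hγ : -1 < γ) (ht : 1 ≤ t) (hℓ : 1 / 2 ≤ ℓ)
    (hℓt : ℓ ≤ t / 2)
    (hint : IntervalIntegrable (fun s => s ^ (2 * α) *
      (∫ u in (max s t)..(t + 1), u ^ β * (u - s) ^ γ) ^ 2) volume 0 (t + 1)) :
    ℓ / 2 * ((2 ^ |α|)⁻¹ * t ^ α * ((2 ^ |β|)⁻¹ * t ^ β * ((3 ^ |γ|)⁻¹ * ℓ ^ γ))) ^ 2 ≤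
      ∫ s in (0:ℝ)..(t + 1),
        s ^ (2 * α) * (∫ u in (max s t)..(t + 1), u ^ β * (u - s) ^ γ) ^ 2 := by
  have ht0 : 0 < t := by linarith
  have hℓ0 : 0 < ℓ := by linarith
  calc ℓ / 2 * ((2 ^ |α|)⁻¹ * t ^ α * ((2 ^ |β|)⁻¹ * t ^ β * ((3 ^ |γ|)⁻¹ * ℓ ^ γ))) ^ 2
      = (t - ℓ / 2 - (t - ℓ)) *
          ((2 ^ |α|)⁻¹ * t ^ α * ((2 ^ |β|)⁻¹ * t ^ β * ((3 ^ |γ|)⁻¹ * ℓ ^ γ))) ^ 2 := by ring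
    _ ≤ _ := mul_le_integral_of_le_on (by linarith) (by linarith) (by linarith)
        (fun s hs => mul_nonneg (Real.rpow_nonneg hs.1.le _) (sq_nonneg _)) hint fun s hs => ?_
  have hs0 : 0 < s := by linarith [hs.1]
  have hsα : (2 ^ |α|)⁻¹ * t ^ α ≤ s ^ α :=
    inv_mul_rpow_le_rpow_of_le_mul ht0 one_le_two (by linarith [hs.1]) (by linarith [hs.2])
  have hinner : (2 ^ |β|)⁻¹ * t ^ β * ((3 ^ |γ|)⁻¹ * ℓ ^ γ) ≤
      ∫ u in t..t + 1, u ^ β * (u - s) ^ γ :=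
    inv_mul_le_integral_kernel_shift hγ ht hs0.le (by linarith [hs.2]) (by positivity)
      fun u hu => inv_mul_rpow_le_rpow_of_le_mul hℓ0 (by norm_num)
        (by linarith [hu.1, hs.2]) (by linarith [hu.2, hs.1])
  rw [max_eq_right (by linarith [hs.2]), mul_comm 2 α, Real.rpow_mul hs0.le, Real.rpow_two,
    ← mul_pow]
  exact pow_le_pow_left₀ (by positivity)
    (mul_le_mul hsα hinner (by positivity) (Real.rpow_nonneg hs0.le _)) 2

lemma exists_rpow_sq_le_integral_var (α β : ℝ) {γ : ℝ} (hγ : -1 < γ) :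
    ∃ K, 0 < K ∧ ∀ t, 1 ≤ t →
      IntervalIntegrable (fun s => s ^ (2 * α) *
        (∫ u in (max s t)..(t + 1), u ^ β * (u - s) ^ γ) ^ 2) volume 0 (t + 1) →
      K * (t ^ (α + β + max 0 (γ + 1 / 2))) ^ 2 ≤
        ∫ s in (0:ℝ)..(t + 1),
          s ^ (2 * α) * (∫ u in (max s t)..(t + 1), u ^ β * (u - s) ^ γ) ^ 2 := by
  refine ⟨((2 ^ |α|)⁻¹ * (2 ^ |β|)⁻¹ * (3 ^ |γ|)⁻¹ * (2 ^ |γ|)⁻¹) ^ 2 / 4, by positivity,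
    fun t ht hint => ?_⟩
  have ht0 : 0 < t := by linarith
  rcases le_or_gt γ (-1 / 2) with hγ' | hγ'
  · refine le_trans ?_ (le_integral_var_of_window hγ ht le_rfl (by linarith) hint)
    have hγ2 : (2 ^ |γ|)⁻¹ ≤ (1 / 2 : ℝ) ^ γ := by
      simpa using inv_mul_rpow_le_rpow_of_le_mul (p := γ) one_pos one_le_two
        (by norm_num : (1 : ℝ) ≤ 2 * (1 / 2)) (by norm_num)
    rw [max_eq_left (by linarith), add_zero, Real.rpow_add ht0]
    calc ((2 ^ |α|)⁻¹ * (2 ^ |β|)⁻¹ * (3 ^ |γ|)⁻¹ * (2 ^ |γ|)⁻¹) ^ 2 / 4 * (t ^ α * t ^ β) ^ 2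
        = 1 / 2 / 2 * ((2 ^ |α|)⁻¹ * t ^ α *
            ((2 ^ |β|)⁻¹ * t ^ β * ((3 ^ |γ|)⁻¹ * (2 ^ |γ|)⁻¹))) ^ 2 := by ring
      _ ≤ _ := by gcongr
  · refine le_trans ?_ (le_integral_var_of_window hγ ht (by linarith) le_rfl hint)
    have hγ2 : (2 ^ |γ|)⁻¹ * t ^ γ ≤ (t / 2) ^ γ :=
      inv_mul_rpow_le_rpow_of_le_mul ht0 one_le_two (by linarith) (by linarith)
    have hsq : √t ^ 2 = t := Real.sq_sqrt ht0.le
    rw [max_eq_right (by linarith), Real.rpow_add ht0 (α + β), Real.rpow_add ht0 α,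
      Real.rpow_add ht0 γ, ← Real.sqrt_eq_rpow]
    calc ((2 ^ |α|)⁻¹ * (2 ^ |β|)⁻¹ * (3 ^ |γ|)⁻¹ * (2 ^ |γ|)⁻¹) ^ 2 / 4 *
          (t ^ α * t ^ β * (t ^ γ * √t)) ^ 2
        = t / 2 / 2 * ((2 ^ |α|)⁻¹ * t ^ α *
            ((2 ^ |β|)⁻¹ * t ^ β * ((3 ^ |γ|)⁻¹ * ((2 ^ |γ|)⁻¹ * t ^ γ)))) ^ 2 := by
          linear_combination ((2 ^ |α|)⁻¹ * (2 ^ |β|)⁻¹ * (3 ^ |γ|)⁻¹ * (2 ^ |γ|)⁻¹) ^ 2 / 4 *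
            (t ^ α * t ^ β * t ^ γ) ^ 2 * hsq
      _ ≤ _ := by gcongr

lemma div_sqrt_mul_sqrt_le {F V C A B x y : ℝ} (hF0 : 0 ≤ F) (hF : F ≤ A * x) (hB : 0 < B)
    (hy : 0 < y) (hV : B * y ^ 2 ≤ V) : F / (√C * √V) ≤ A / (√C * √B) * (x / y) := by
  rcases (Real.sqrt_nonneg C).eq_or_lt with hC | hC
  · simp [← hC]
  have hVy : √B * y ≤ √V := by
    rw [← Real.sqrt_sq hy.le, ← Real.sqrt_mul hB.le]
    exact Real.sqrt_le_sqrt hV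
  calc F / (√C * √V) ≤ F / (√C * (√B * y)) := by gcongr
    _ ≤ A * x / (√C * (√B * y)) := by gcongr
    _ = A / (√C * √B) * (x / y) := by ring

lemma summable_of_le_rpow {r : ℝ → ℝ} {K e : ℝ} (he : e < -1) (h0 : ∀ t, 1 ≤ t → 0 ≤ r t)
    (hle : ∀ t, 1 ≤ t → r t ≤ K * t ^ e) : Summable fun n : ℕ => r (n + 1) := by
  have hsum : Summable fun n : ℕ => K * ((n + 1 : ℕ) : ℝ) ^ e :=
    ((summable_nat_add_iff 1).2 (Real.summable_nat_rpow.2 he)).mul_left K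
  refine Summable.of_nonneg_of_le (fun n => h0 _ ?_) (fun n => ?_) hsum
  · simp
  · exact_mod_cast hle _ (by simp)

lemma setLIntegral_Ici_lt_top_of_le_rpow {r : ℝ → ℝ} {K e : ℝ} (he : e < -1)
    (hle : ∀ t, 1 ≤ t → r t ≤ K * t ^ e) :
    ∫⁻ t in Ici 1, ENNReal.ofReal (r t) < ⊤ :=
  calc ∫⁻ t in Ici 1, ENNReal.ofReal (r t) ≤ ∫⁻ t in Ici 1, ENNReal.ofReal (K * t ^ e) :=
        setLIntegral_mono' measurableSet_Ici fun t ht => ENNReal.ofReal_le_ofReal (hle t ht)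
    _ < ⊤ := (((integrableOn_Ici_iff_integrableOn_Ioi).2
        (integrableOn_Ioi_rpow_of_lt he one_pos)).const_mul K).lintegral_lt_top

theorem stmt_10_general (α β γ : ℝ) (hα : -(1/2 : ℝ) < α) (hγ : -1 < γ)
    (hαβγ : -(3/2 : ℝ) < α + β + γ) (hcond : min γ (-(1/2 : ℝ)) < α - 1)
    (F V r : ℝ → ℝ) (C : ℝ)
    (hF : ∀ t : ℝ, F t = ∫ s in (0:ℝ)..1, s ^ (2*α) *
      (∫ u in s..1, u ^ β * (u - s) ^ γ) *
      (∫ v in t..(t+1), v ^ β * (v - s) ^ γ))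
    (hV : ∀ t : ℝ, V t = ∫ s in (0:ℝ)..(t+1), s ^ (2*α) *
      (∫ u in (max s t)..(t+1), u ^ β * (u - s) ^ γ) ^ 2)
    (hr : ∀ t : ℝ, r t = F t / (Real.sqrt C * Real.sqrt (V t))) :
    (Summable fun n : ℕ => r (n + 1)) ∧
    (∫⁻ t in Set.Ici (1:ℝ), ENNReal.ofReal (r t)) < ⊤ := by
  obtain ⟨A, hA, hFle⟩ := exists_integral_cov_le_rpow hα hγ hαβγ
  obtain ⟨B, hB, hVge⟩ := exists_rpow_sq_le_integral_var α β hγ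
  have he : β + γ - (α + β + max 0 (γ + 1 / 2)) < -1 := by
    have := min_sub_sub_left γ 0 (γ + 1 / 2)
    rw [sub_zero, show γ - (γ + 1 / 2) = -(1 / 2) by ring] at this
    linarith
  have hF0 : ∀ t, 1 ≤ t → 0 ≤ F t := fun t ht => by
    rw [hF]
    exact intervalIntegral.integral_nonneg zero_le_one fun s hs =>
      cov_integrand_nonneg α β γ hs.1 hs.2 ht
  have hr0 : ∀ t, 1 ≤ t → 0 ≤ r t := fun t ht => by
    rw [hr]
    exact div_nonneg (hF0 t ht) (by positivity)
  have hrle : ∀ t, 1 ≤ t →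
      r t ≤ A / (√C * √B) * t ^ (β + γ - (α + β + max 0 (γ + 1 / 2))) := fun t ht => by
    have ht0 : 0 < t := by linarith
    rw [hr, Real.rpow_sub ht0]
    by_cases hint : IntervalIntegrable (fun s => s ^ (2 * α) *
        (∫ u in (max s t)..(t + 1), u ^ β * (u - s) ^ γ) ^ 2) volume 0 (t + 1)
    · exact div_sqrt_mul_sqrt_le (hF0 t ht) (hF t ▸ hFle t ht) hB (by positivity)
        (hV t ▸ hVge t ht hint)
    · -- junk value: a non-integrable integrand makes `V t = 0`, hence `r t = 0`
      rw [hV, intervalIntegral.integral_undef hint]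
      simp only [Real.sqrt_zero, mul_zero, div_zero]
      positivity
  exact ⟨summable_of_le_rpow he hr0 hrle, setLIntegral_Ici_lt_top_of_le_rpow he hrle⟩

/-- Theorem 3.5 (consequence): if `min(γ, -1/2) < α - 1`, then
`∑_{n≥1} corr(X₁, X_{n+1} - X_n)` converges and
`∫₁^∞ corr(X₁, X_{t+1} - X_t) dt` is finite. -/
theorem stmt_10 (α β γ : ℝ) (hα : -(1/2 : ℝ) < α) (hγ : -1 < γ)
    (hαβγ : -(3/2 : ℝ) < α + β + γ) (hcond : min γ (-(1/2 : ℝ)) < α - 1)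
    (F V r : ℝ → ℝ) (C : ℝ)
    (hF : ∀ t : ℝ, F t = ∫ s in (0:ℝ)..1, s ^ (2*α) *
      (∫ u in s..1, u ^ β * (u - s) ^ γ) *
      (∫ v in t..(t+1), v ^ β * (v - s) ^ γ))
    (hV : ∀ t : ℝ, V t = ∫ s in (0:ℝ)..(t+1), s ^ (2*α) *
      (∫ u in (max s t)..(t+1), u ^ β * (u - s) ^ γ) ^ 2)
    (hC : C = ∫ s in (0:ℝ)..1, s ^ (2*α) *
      (∫ u in s..1, u ^ β * (u - s) ^ γ) ^ 2)
    (hr : ∀ t : ℝ, r t = F t / (Real.sqrt C * Real.sqrt (V t))) :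
    (Summable fun n : ℕ => r (n + 1)) ∧
    (∫⁻ t in Set.Ici (1:ℝ), ENNReal.ofReal (r t)) < ⊤ :=
  stmt_10_general α β γ hα hγ hαβγ hcond F V r C hF hV hr
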